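/- arXiv:2104.02295 — 2 statements merged into one kernel-verified Lean document; each statement's English description precedes it below -/
import Mathlib

section
/- For every T > 0 and δ ∈ (0, 1/4) there is a constant K = K(T, δ) such that for all 0 < s < r < t ≤ T and all x, z ∈ ℝ: [p_{r-s}(x - z) - p_{t-s}(x - z)]² ≤ K (t - r)^δ (r - s)^{-3δ/2} [p_{r-s}(x - z)^{2-δ} + p_{t-s}(x - z)^{2-δ}]. -/
open Real MeasureTheory

noncomputable def heatKernel (t x : ℝ) : ℝ :=
  (2 * π * t) ^ (-(1:ℝ)/2) * Real.exp (-x^2 / (2*t))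

/-!
Write `d = p_a(u) - p_b(u)` with `a = r - s ≤ b = t - s` and split `d² = |d|^(2-δ) |d|^δ`.
For the first factor, `|d| ≤ max (p_a(u), p_b(u))` since both are positive. For the second,
`|∂_τ p_τ(u)| = p_τ(u) |u²/(2τ²) - 1/(2τ)| ≤ τ^(-3/2)` because `(c + 1) e^(-c) ≤ 1`
for `c = u²/(2τ)`, so the mean value theorem gives `|d| ≤ a^(-3/2) (b - a)`. Hence `K = 1` works.
-/

lemma sq_le_abs_rpow_mul_rpow {d B δ : ℝ} (hB : |d| ≤ B) (hδ : 0 ≤ δ) :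
    d ^ 2 ≤ |d| ^ (2 - δ) * B ^ δ := by
  calc d ^ 2 = |d| ^ (2 - δ) * |d| ^ δ := by
        rw [← rpow_add' (abs_nonneg d) (by norm_num), sub_add_cancel, rpow_two, sq_abs]
    _ ≤ |d| ^ (2 - δ) * B ^ δ := by gcongr

lemma abs_sub_rpow_le_rpow_add_rpow {a b q : ℝ} (ha : 0 ≤ a) (hb : 0 ≤ b) (hq : 0 ≤ q) :
    |a - b| ^ q ≤ a ^ q + b ^ q :=
  calc |a - b| ^ q ≤ max a b ^ q := by
        gcongr
        exact abs_sub_le_iff.2 ⟨by linarith [le_max_left a b], by linarith [le_max_right a b]⟩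
    _ = max (a ^ q) (b ^ q) := rpow_max ha hb hq
    _ ≤ a ^ q + b ^ q := max_le_add_of_nonneg (by positivity) (by positivity)

lemma heatKernel_pos {t : ℝ} (ht : 0 < t) (x : ℝ) : 0 < heatKernel t x := by
  unfold heatKernel
  positivity

lemma hasDerivAt_heatKernel_time (x : ℝ) {t : ℝ} (ht : 0 < t) :
    HasDerivAt (fun τ => heatKernel τ x)
      (heatKernel t x * (x ^ 2 / (2 * t ^ 2) - 1 / (2 * t))) t := by
  have h2πt : 0 < 2 * π * t := by positivity
  have hexponent : HasDerivAt (fun τ : ℝ => -x ^ 2 / (2 * τ)) (x ^ 2 / (2 * t ^ 2)) t := by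
    have h := (hasDerivAt_inv ht.ne').const_mul (-x ^ 2 / 2)
    rw [show (fun τ : ℝ => -x ^ 2 / 2 * τ⁻¹) = fun τ => -x ^ 2 / (2 * τ) from
      funext fun τ => by ring] at h
    exact h.congr_deriv (by field_simp)
  refine ((((hasDerivAt_id t).const_mul (2 * π)).rpow_const (p := -(1:ℝ)/2)
    (Or.inl h2πt.ne')).mul hexponent.exp).congr_deriv ?_
  rw [id, rpow_sub h2πt, rpow_one]
  unfold heatKernel
  field_simp
  ring

lemma heatKernel_mul_add_one_le {t : ℝ} (ht : 0 < t) (x : ℝ) :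
    heatKernel t x * (x ^ 2 / (2 * t) + 1) ≤ t ^ (-(1:ℝ)/2) := by
  have hgauss : exp (-x ^ 2 / (2 * t)) * (x ^ 2 / (2 * t) + 1) ≤ 1 := by
    rw [neg_div, exp_neg, inv_mul_le_iff₀ (exp_pos _), mul_one]
    exact add_one_le_exp _
  have hprefactor : (2 * π * t) ^ (-(1:ℝ)/2) ≤ t ^ (-(1:ℝ)/2) :=
    rpow_le_rpow_of_nonpos ht (by nlinarith [pi_gt_three]) (by norm_num)
  unfold heatKernel
  calc (2 * π * t) ^ (-(1:ℝ)/2) * exp (-x ^ 2 / (2 * t)) * (x ^ 2 / (2 * t) + 1)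
      = (2 * π * t) ^ (-(1:ℝ)/2) * (exp (-x ^ 2 / (2 * t)) * (x ^ 2 / (2 * t) + 1)) := by ring
    _ ≤ t ^ (-(1:ℝ)/2) * 1 := by gcongr
    _ = t ^ (-(1:ℝ)/2) := mul_one _

lemma abs_heatKernel_time_deriv_le {t : ℝ} (ht : 0 < t) (x : ℝ) :
    |heatKernel t x * (x ^ 2 / (2 * t ^ 2) - 1 / (2 * t))| ≤ t ^ (-(3:ℝ)/2) := by
  have hp := heatKernel_pos ht x
  have hfactor : |x ^ 2 / (2 * t ^ 2) - 1 / (2 * t)| ≤ (x ^ 2 / (2 * t) + 1) * t⁻¹ := by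
    have hc : 0 ≤ x ^ 2 / (2 * t) := by positivity
    rw [show x ^ 2 / (2 * t ^ 2) - 1 / (2 * t) = (x ^ 2 / (2 * t) - 1 / 2) * t⁻¹ by field_simp,
      abs_mul, abs_of_pos (inv_pos.2 ht)]
    gcongr
    exact abs_le.2 ⟨by linarith, by linarith⟩
  calc |heatKernel t x * (x ^ 2 / (2 * t ^ 2) - 1 / (2 * t))|
      = heatKernel t x * |x ^ 2 / (2 * t ^ 2) - 1 / (2 * t)| := by rw [abs_mul, abs_of_pos hp]
    _ ≤ heatKernel t x * ((x ^ 2 / (2 * t) + 1) * t⁻¹) := by gcongr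
    _ ≤ t ^ (-(1:ℝ)/2) * t⁻¹ := by
        rw [← mul_assoc]; gcongr; exact heatKernel_mul_add_one_le ht x
    _ = t ^ (-(3:ℝ)/2) := by rw [← rpow_neg_one, ← rpow_add ht]; norm_num

lemma abs_heatKernel_sub_le {a b : ℝ} (ha : 0 < a) (hab : a ≤ b) (x : ℝ) :
    |heatKernel a x - heatKernel b x| ≤ a ^ (-(3:ℝ)/2) * (b - a) := by
  have hmvt := (convex_Icc a b).norm_image_sub_le_of_norm_hasDerivWithin_le
    (f := fun τ => heatKernel τ x)
    (fun τ hτ => (hasDerivAt_heatKernel_time x (ha.trans_le hτ.1)).hasDerivWithinAt)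
    (fun τ hτ => (abs_heatKernel_time_deriv_le (ha.trans_le hτ.1) x).trans
      (rpow_le_rpow_of_nonpos ha hτ.1 (by norm_num)))
    (Set.left_mem_Icc.2 hab) (Set.right_mem_Icc.2 hab)
  rwa [Real.norm_eq_abs, Real.norm_eq_abs, abs_sub_comm, abs_of_nonneg (sub_nonneg.2 hab)]
    at hmvt

lemma heatKernel_sub_sq_le {a b δ : ℝ} (ha : 0 < a) (hab : a ≤ b) (hδ₀ : 0 ≤ δ) (hδ₂ : δ ≤ 2)
    (x : ℝ) :
    (heatKernel a x - heatKernel b x) ^ 2 ≤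
      (b - a) ^ δ * a ^ (-(3 * δ) / 2) * (heatKernel a x ^ (2 - δ) + heatKernel b x ^ (2 - δ)) := by
  have hsub_rpow := abs_sub_rpow_le_rpow_add_rpow (heatKernel_pos ha x).le
    (heatKernel_pos (ha.trans_le hab) x).le (sub_nonneg.2 hδ₂)
  have hscale : (a ^ (-(3:ℝ)/2) * (b - a)) ^ δ = (b - a) ^ δ * a ^ (-(3 * δ) / 2) := by
    rw [mul_rpow (by positivity) (sub_nonneg.2 hab), ← rpow_mul ha.le]
    ring_nf
  calc _ ≤ _ := sq_le_abs_rpow_mul_rpow (abs_heatKernel_sub_le ha hab x) hδ₀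
    _ ≤ (heatKernel a x ^ (2 - δ) + heatKernel b x ^ (2 - δ)) * (a ^ (-(3:ℝ)/2) * (b - a)) ^ δ := by
        gcongr
    _ = _ := by rw [hscale]; ring

theorem heat_pointwise_interpolation_general (T δ : ℝ) (hδ : δ ∈ Set.Ioo (0:ℝ) (1/4)) :
    ∃ K : ℝ, 0 ≤ K ∧ ∀ s r t x z : ℝ, 0 < s → s < r → r < t → t ≤ T →
      (heatKernel (r - s) (x - z) - heatKernel (t - s) (x - z))^2
        ≤ K * (t - r) ^ δ * (r - s) ^ (-(3 * δ) / 2) *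
          ((heatKernel (r - s) (x - z)) ^ (2 - δ) + (heatKernel (t - s) (x - z)) ^ (2 - δ)) := by
  refine ⟨1, zero_le_one, fun s r t x z _ hsr hrt _ => ?_⟩
  have h := heatKernel_sub_sq_le (sub_pos.2 hsr) (sub_le_sub_right hrt.le s) hδ.1.le
    (by linarith [hδ.2]) (x - z)
  rwa [sub_sub_sub_cancel_right, ← one_mul ((t - r) ^ δ)] at h

theorem heat_pointwise_interpolation (T δ : ℝ) (hT : 0 < T) (hδ : δ ∈ Set.Ioo (0:ℝ) (1/4)) :
    ∃ K : ℝ, 0 ≤ K ∧ ∀ s r t x z : ℝ, 0 < s → s < r → r < t → t ≤ T →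
      (heatKernel (r - s) (x - z) - heatKernel (t - s) (x - z))^2
        ≤ K * (t - r) ^ δ * (r - s) ^ (-(3 * δ) / 2) *
          ((heatKernel (r - s) (x - z)) ^ (2 - δ) + (heatKernel (t - s) (x - z)) ^ (2 - δ)) :=
  heat_pointwise_interpolation_general T δ hδ
end

section
/- Let Φ ∈ C_c²(0,1) with 0 ≤ Φ ≤ 2 and ∫_0^1 Φ = 1, and h_k(x) = (∫_0^{kx} Φ)·(∫_{x^k}^1 Φ). If f ∈ C[0,1] and the one-sided derivatives f'(0) and f'(1) exist, then lim_{k→∞} ∫_0^1 f(x) h_k''(x) dx = f'(1) − f'(0). -/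
/-! With `A t = ∫ z in 0..t, Φ z` one has `h_k x = A (k x) * (1 - A (x ^ k))`. As `Φ` is
supported in `[ε, 1 - ε]`, for large `k` the function `h_k` vanishes near `0` and `1` and equals
`1` on `[δ, 1 - δ]`, so `h_k''` concentrates at the two endpoints. On `[0, 1/2]` and on
`[1/2, 1]` it is a kernel with zeroth moment `0`, first moment about the endpoint `-1` resp. `1`
(integrate by parts against the boundary values of `h_k`), and bounded mass
`∫ |x - x₀| |h_k''|`. Pairing such a kernel with `f` gives, in the limit, the first moment times
the one-sided derivative of `f` at the endpoint. -/

open Real MeasureTheory Filter intervalIntegral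

noncomputable def hAux (Φ : ℝ → ℝ) (k : ℕ) (x : ℝ) : ℝ :=
  (∫ z in (0:ℝ)..(k * x), Φ z) * (∫ z in (x ^ k)..(1:ℝ), Φ z)

open Topology Set

theorem IsCompact.exists_pos_subset_Ioo {K : Set ℝ} (hK : IsCompact K) {a b : ℝ}
    (h : K ⊆ Ioo a b) : ∃ ε > 0, K ⊆ Ioo (a + ε) (b - ε) := by
  obtain ⟨δ, hδ, hsub⟩ := hK.exists_cthickening_subset_open isOpen_Ioo h
  have hmem : ∀ x ∈ K, ∀ y, |y - x| = δ → y ∈ Ioo a b := fun x hx y hy =>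
    hsub (Metric.mem_cthickening_of_dist_le y x δ K hx (by rw [Real.dist_eq, hy]))
  refine ⟨δ, hδ, fun x hx => ⟨?_, ?_⟩⟩
  · linarith [(hmem x hx (x - δ) (by simp [abs_of_pos hδ])).1]
  · linarith [(hmem x hx (x + δ) (by simp [abs_of_pos hδ])).2]

theorem tendsto_integral_mul_of_moments {ι : Type*} {l : Filter ι} {f : ℝ → ℝ}
    {K : ι → ℝ → ℝ} {a b x₀ c d C : ℝ} (hab : a ≤ b) (hf : ContinuousOn f (Icc a b))
    (hfd : HasDerivWithinAt f d (Icc a b) x₀) (hK : ∀ i, ContinuousOn (K i) (Icc a b))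
    (hK₀ : ∀ᶠ i in l, ∫ x in a..b, K i x = 0)
    (hK₁ : ∀ᶠ i in l, ∫ x in a..b, (x - x₀) * K i x = c)
    (hKC : ∀ᶠ i in l, ∫ x in a..b, |x - x₀| * |K i x| ≤ C)
    (hKloc : ∀ δ > 0, ∀ᶠ i in l, ∀ x ∈ Icc a b, δ ≤ |x - x₀| → K i x = 0) :
    Tendsto (fun i => ∫ x in a..b, f x * K i x) l (𝓝 (c * d)) := by
  rw [Metric.tendsto_nhds]
  intro ε hε
  set η := ε / (|C| + 1)
  have hη : 0 < η := by positivity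
  obtain ⟨δ, hδ, hr⟩ : ∃ δ > 0, ∀ x ∈ Icc a b, |x - x₀| < δ →
      |f x - f x₀ - d * (x - x₀)| ≤ η * |x - x₀| := by
    have := (hasDerivWithinAt_iff_isLittleO.mp hfd).def hη
    rw [eventually_nhdsWithin_iff, Metric.eventually_nhds_iff] at this
    obtain ⟨δ, hδ, h⟩ := this
    refine ⟨δ, hδ, fun x hx hxδ => ?_⟩
    simpa [mul_comm d] using h hxδ hx
  have hint : ∀ {g : ℝ → ℝ}, ContinuousOn g (Icc a b) → IntervalIntegrable g volume a b :=
    fun hg => hg.intervalIntegrable_of_Icc hab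
  filter_upwards [hK₀, hK₁, hKC, hKloc δ hδ] with i h₀ h₁ hC hloc
  have hrem : (∫ x in a..b, f x * K i x) - c * d
      = ∫ x in a..b, (f x - f x₀ - d * (x - x₀)) * K i x := by
    have hexp : ∀ x, (f x - f x₀ - d * (x - x₀)) * K i x
        = f x * K i x - f x₀ * K i x - d * ((x - x₀) * K i x) := fun x => by ring
    simp_rw [hexp]
    rw [intervalIntegral.integral_sub, intervalIntegral.integral_sub,
      intervalIntegral.integral_const_mul, intervalIntegral.integral_const_mul, h₀, h₁]
    · ring
    all_goals exact hint (by fun_prop)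
  have hbound : ‖∫ x in a..b, (f x - f x₀ - d * (x - x₀)) * K i x‖
      ≤ ∫ x in a..b, η * (|x - x₀| * |K i x|) := by
    refine norm_integral_le_of_norm_le hab (ae_of_all _ fun x hx => ?_) (hint (by fun_prop))
    have hx : x ∈ Icc a b := Ioc_subset_Icc_self hx
    rw [Real.norm_eq_abs, abs_mul, ← mul_assoc]
    rcases lt_or_ge |x - x₀| δ with hxδ | hxδ
    · exact mul_le_mul_of_nonneg_right (hr x hx hxδ) (abs_nonneg _)
    · simp [hloc x hx hxδ]
  rw [dist_eq_norm, hrem]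
  rw [intervalIntegral.integral_const_mul] at hbound
  calc _ ≤ η * C := hbound.trans (mul_le_mul_of_nonneg_left hC hη.le)
    _ ≤ η * |C| := by gcongr; exact le_abs_self C
    _ < ε := by
      rw [div_mul_eq_mul_div, div_lt_iff₀ (by positivity)]
      nlinarith [abs_nonneg C]

section SecondDerivative

variable {g : ℝ → ℝ} {a b p u v : ℝ}

theorem deriv_eq_zero_of_eventuallyEq_const (h : g =ᶠ[𝓝 p] fun _ => u) : deriv g p = 0 := by
  rw [h.deriv_eq, deriv_const]

theorem deriv_deriv_eq_zero_of_eventuallyEq_const (h : g =ᶠ[𝓝 p] fun _ => u) :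
    deriv (deriv g) p = 0 := by
  rw [h.deriv.deriv_eq]
  simp

theorem ContDiff.continuous_deriv_deriv (hg : ContDiff ℝ 2 g) : Continuous (deriv (deriv g)) :=
  (hg.deriv' : ContDiff ℝ 1 (deriv g)).continuous_deriv le_rfl

theorem integral_deriv_deriv_eq_zero_of_eventuallyEq_const (hg : ContDiff ℝ 2 g)
    (ha : g =ᶠ[𝓝 a] fun _ => u) (hb : g =ᶠ[𝓝 b] fun _ => v) :
    ∫ x in a..b, deriv (deriv g) x = 0 := by
  have hg' : ContDiff ℝ 1 (deriv g) := hg.deriv'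
  rw [integral_deriv_eq_sub (fun x _ => (hg'.differentiable one_ne_zero).differentiableAt)
    (hg.continuous_deriv_deriv.intervalIntegrable _ _),
    deriv_eq_zero_of_eventuallyEq_const ha, deriv_eq_zero_of_eventuallyEq_const hb, sub_zero]

theorem integral_sub_mul_deriv_deriv_of_eventuallyEq_const (hg : ContDiff ℝ 2 g)
    (ha : g =ᶠ[𝓝 a] fun _ => u) (hb : g =ᶠ[𝓝 b] fun _ => v) (x₀ : ℝ) :
    ∫ x in a..b, (x - x₀) * deriv (deriv g) x = u - v := by
  have hg' : ContDiff ℝ 1 (deriv g) := hg.deriv'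
  rw [integral_mul_deriv_eq_deriv_mul (u := fun x => x - x₀) (u' := fun _ => 1)
    (fun x _ => (hasDerivAt_id x).sub_const x₀)
    (fun x _ => ((hg'.differentiable one_ne_zero) x).hasDerivAt)
    intervalIntegrable_const (hg.continuous_deriv_deriv.intervalIntegrable _ _)]
  simp only [one_mul]
  rw [integral_deriv_eq_sub (fun x _ => (hg.differentiable two_ne_zero).differentiableAt)
    ((hg.continuous_deriv one_le_two).intervalIntegrable _ _),
    deriv_eq_zero_of_eventuallyEq_const ha, deriv_eq_zero_of_eventuallyEq_const hb,
    ha.eq_of_nhds, hb.eq_of_nhds]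
  ring

end SecondDerivative

theorem integral_abs_mul_abs_sq_mul_comp_mul_le {ψ : ℝ → ℝ} (hψ : Continuous ψ)
    (hψs : HasCompactSupport ψ) {a b c : ℝ} (hab : a ≤ b) (hc : 0 < c) :
    ∫ x in a..b, |x| * |c ^ 2 * ψ (c * x)| ≤ ∫ u, |u| * |ψ u| := by
  have hscale : ∀ x, |x| * |c ^ 2 * ψ (c * x)| = c * (|c * x| * |ψ (c * x)|) := fun x => by
    rw [abs_mul, abs_mul, abs_of_pos (pow_pos hc 2), abs_of_pos hc]
    ring
  simp_rw [hscale]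
  rw [intervalIntegral.integral_const_mul, ← smul_eq_mul,
    smul_integral_comp_mul_left (fun u => |u| * |ψ u|),
    intervalIntegral.integral_of_le (mul_le_mul_of_nonneg_left hab hc.le)]
  refine setIntegral_le_integral ?_ (ae_of_all _ fun u => by positivity)
  exact (by fun_prop : Continuous fun u => |u| * |ψ u|).integrable_of_hasCompactSupport
    hψs.abs.mul_left

theorem integral_one_sub_mul_pow (n : ℕ) :
    ∫ x in (0:ℝ)..1, (1 - x) * x ^ n = 1 / ((n + 1) * (n + 2)) := by
  have hexp : ∀ x : ℝ, (1 - x) * x ^ n = x ^ n - x ^ (n + 1) := fun x => by ring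
  simp_rw [hexp]
  rw [intervalIntegral.integral_sub (intervalIntegrable_pow _) (intervalIntegrable_pow _),
    integral_pow, integral_pow]
  field_simp
  push_cast
  ring

section PowComp

variable {A : ℝ → ℝ}

theorem deriv_deriv_comp_pow_add_two (hA : ContDiff ℝ 2 A) (n : ℕ) (x : ℝ) :
    deriv (deriv fun y => A (y ^ (n + 2))) x
      = (n + 2) * (n + 1) * x ^ n * deriv A (x ^ (n + 2))
        + ((n + 2) * x ^ (n + 1)) ^ 2 * deriv (deriv A) (x ^ (n + 2)) := by
  have hA' : ContDiff ℝ 1 (deriv A) := hA.deriv'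
  have hpow₂ : ∀ y : ℝ, HasDerivAt (fun y => y ^ (n + 2)) ((n + 2) * y ^ (n + 1)) y :=
    fun y => by simpa [add_assoc, one_add_one_eq_two] using hasDerivAt_pow (n + 2) y
  have hpow₁ : ∀ y : ℝ, HasDerivAt (fun y => y ^ (n + 1)) ((n + 1) * y ^ n) y :=
    fun y => by simpa using hasDerivAt_pow (n + 1) y
  have h₁ : deriv (fun y => A (y ^ (n + 2)))
      = fun y => deriv A (y ^ (n + 2)) * ((n + 2) * y ^ (n + 1)) := by
    funext y
    exact ((hA.differentiable two_ne_zero _).hasDerivAt.comp y (hpow₂ y)).deriv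
  have h₂ := ((hA'.differentiable one_ne_zero _).hasDerivAt.comp x (hpow₂ x)).mul
    ((hpow₁ x).const_mul ((n:ℝ) + 2))
  rw [h₁]
  refine h₂.deriv.trans ?_
  simp only [Function.comp_apply]
  ring

theorem abs_sub_one_mul_abs_deriv_deriv_comp_pow_le (hA : ContDiff ℝ 2 A) {M M' : ℝ}
    (hM : ∀ t, |deriv A t| ≤ M) (hM' : ∀ t, |deriv (deriv A) t| ≤ M') (n : ℕ) {x : ℝ}
    (hx : x ∈ Icc (0:ℝ) 1) :
    |x - 1| * |deriv (deriv fun y => A (y ^ (n + 2))) x|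
      ≤ (n + 2) * (n + 1) * M * ((1 - x) * x ^ n)
        + (n + 2) ^ 2 * M' * ((1 - x) * x ^ (2 * n + 2)) := by
  obtain ⟨hx₀, hx₁⟩ := hx
  have h₁ : |(n + 2) * (n + 1) * x ^ n * deriv A (x ^ (n + 2))|
      ≤ (n + 2) * (n + 1) * x ^ n * M := by
    rw [abs_mul, abs_of_nonneg (by positivity)]
    exact mul_le_mul_of_nonneg_left (hM _) (by positivity)
  have h₂ : |((n + 2) * x ^ (n + 1)) ^ 2 * deriv (deriv A) (x ^ (n + 2))|
      ≤ ((n + 2) * x ^ (n + 1)) ^ 2 * M' := by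
    rw [abs_mul, abs_of_nonneg (by positivity)]
    exact mul_le_mul_of_nonneg_left (hM' _) (by positivity)
  rw [deriv_deriv_comp_pow_add_two hA, abs_of_nonpos (by linarith : x - 1 ≤ 0), neg_sub]
  calc _ ≤ (1 - x) * ((n + 2) * (n + 1) * x ^ n * M + ((n + 2) * x ^ (n + 1)) ^ 2 * M') :=
        mul_le_mul_of_nonneg_left ((abs_add_le _ _).trans (add_le_add h₁ h₂)) (by linarith)
    _ = _ := by ring

theorem integral_abs_sub_one_mul_abs_deriv_deriv_comp_pow_le (hA : ContDiff ℝ 2 A) {M M' : ℝ}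
    (hM : ∀ t, |deriv A t| ≤ M) (hM' : ∀ t, |deriv (deriv A) t| ≤ M') {a : ℝ}
    (ha₀ : 0 ≤ a) (ha₁ : a ≤ 1) (n : ℕ) :
    ∫ x in a..1, |x - 1| * |deriv (deriv fun y => A (y ^ (n + 2))) x| ≤ M + M' := by
  have hM₀ : 0 ≤ M := (abs_nonneg _).trans (hM 0)
  have hM₀' : 0 ≤ M' := (abs_nonneg _).trans (hM' 0)
  set g : ℝ → ℝ := fun x =>
    (n + 2) * (n + 1) * M * ((1 - x) * x ^ n) + (n + 2) ^ 2 * M' * ((1 - x) * x ^ (2 * n + 2))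
  have hg : Continuous g := by fun_prop
  have hg₀ : ∀ x ∈ Ioc (0:ℝ) 1, 0 ≤ g x := fun x ⟨hx₀, hx₁⟩ => by
    have : 0 ≤ 1 - x := by linarith
    positivity
  have hgint : ∫ x in (0:ℝ)..1, g x ≤ M + M' := by
    rw [intervalIntegral.integral_add (Continuous.intervalIntegrable (by fun_prop) _ _)
      (Continuous.intervalIntegrable (by fun_prop) _ _),
      intervalIntegral.integral_const_mul, intervalIntegral.integral_const_mul,
      integral_one_sub_mul_pow, integral_one_sub_mul_pow]
    have hfirst : (n + 2) * (n + 1) * M * (1 / ((n + 1) * (n + 2))) = M := by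
      field_simp
    have hsecond : ((n : ℝ) + 2) ^ 2 * M'
        * (1 / ((((2 * n + 2 : ℕ) : ℝ) + 1) * (((2 * n + 2 : ℕ) : ℝ) + 2))) ≤ M' := by
      push_cast
      rw [mul_one_div, div_le_iff₀ (by positivity)]
      nlinarith [mul_nonneg hM₀' (by positivity : (0:ℝ) ≤ 3 * n ^ 2 + 10 * n + 8)]
    linarith
  have hA₂ : Continuous (deriv (deriv fun y => A (y ^ (n + 2)))) :=
    ContDiff.continuous_deriv_deriv (by fun_prop)
  calc _ ≤ ∫ x in a..1, g x :=
        integral_mono_on ha₁ (Continuous.intervalIntegrable (by fun_prop) _ _)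
          (hg.intervalIntegrable _ _)
          fun x hx => abs_sub_one_mul_abs_deriv_deriv_comp_pow_le hA hM hM' n
            ⟨ha₀.trans hx.1, hx.2⟩
    _ ≤ ∫ x in (0:ℝ)..1, g x :=
        integral_mono_interval ha₀ ha₁ le_rfl
          ((ae_restrict_iff' measurableSet_Ioc).mpr (ae_of_all _ hg₀)) (hg.intervalIntegrable _ _)
    _ ≤ M + M' := hgint

end PowComp

theorem deriv_deriv_comp_mul_left (A : ℝ → ℝ) (c x : ℝ) :
    deriv (deriv fun y => A (c * y)) x = c ^ 2 * deriv (deriv A) (c * x) := by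
  have h : deriv (fun y => A (c * y)) = fun y => c * deriv A (c * y) := by
    funext y
    exact deriv_comp_mul_left c A y
  rw [h, deriv_const_mul_field, deriv_comp_mul_left c (deriv A) x, smul_eq_mul]
  ring

theorem deriv_deriv_const_sub (A : ℝ → ℝ) (c x : ℝ) :
    deriv (deriv fun y => c - A y) x = -deriv (deriv A) x := by
  rw [deriv_const_sub', deriv.fun_neg]

noncomputable def cutoffProduct (A : ℝ → ℝ) (k : ℕ) (x : ℝ) : ℝ :=
  A (k * x) * (1 - A (x ^ k))

section CutoffProduct

variable {A : ℝ → ℝ} {ε : ℝ}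

theorem contDiff_cutoffProduct (hA : ContDiff ℝ 2 A) (k : ℕ) :
    ContDiff ℝ 2 (cutoffProduct A k) := by
  unfold cutoffProduct
  fun_prop

theorem cutoffProduct_eventuallyEq_nhds_zero (hε : 0 < ε) (hA₀ : ∀ t < ε, A t = 0)
    (k : ℕ) : cutoffProduct A k =ᶠ[𝓝 0] fun _ => 0 := by
  have : ∀ᶠ y in 𝓝 (0:ℝ), (k:ℝ) * y < ε :=
    (continuous_const.mul continuous_id).continuousAt.eventually (gt_mem_nhds (by simpa using hε))
  filter_upwards [this] with y hy
  simp [cutoffProduct, hA₀ _ hy]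

theorem cutoffProduct_eventuallyEq_nhds_one (hε : 0 < ε) (hA₁ : ∀ t, 1 - ε < t → A t = 1)
    (k : ℕ) : cutoffProduct A k =ᶠ[𝓝 1] fun _ => 0 := by
  have : ∀ᶠ y in 𝓝 (1:ℝ), 1 - ε < y ^ k :=
    (continuous_pow k).continuousAt.eventually (lt_mem_nhds (by simpa using hε))
  filter_upwards [this] with y hy
  simp [cutoffProduct, hA₁ _ hy]

theorem eventually_cutoffProduct_eventuallyEq_one (hε : 0 < ε) (hA₀ : ∀ t < ε, A t = 0)
    (hA₁ : ∀ t, 1 - ε < t → A t = 1) {δ : ℝ} (hδ : 0 < δ) :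
    ∀ᶠ k in atTop, ∀ x ∈ Icc δ (1 - δ), cutoffProduct A k =ᶠ[𝓝 x] fun _ => 1 := by
  rcases le_or_gt δ 1 with hδ₁ | hδ₁
  swap
  · exact Eventually.of_forall fun k x hx => absurd (hx.1.trans hx.2) (by linarith)
  have hdecay : Tendsto (fun k : ℕ => (1 - δ) ^ k) atTop (𝓝 0) :=
    tendsto_pow_atTop_nhds_zero_of_lt_one (by linarith) (by linarith)
  filter_upwards [hdecay.eventually (gt_mem_nhds hε),
    tendsto_natCast_atTop_atTop.eventually_gt_atTop (1 / δ)] with k hkpow hk x hx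
  have hlin : ∀ᶠ y in 𝓝 x, 1 - ε < (k:ℝ) * y := by
    refine (continuous_const.mul continuous_id).continuousAt.eventually (lt_mem_nhds ?_)
    show 1 - ε < (k:ℝ) * x
    have : 1 < (k:ℝ) * δ := by rwa [div_lt_iff₀ hδ] at hk
    nlinarith [hx.1]
  have hpow : ∀ᶠ y in 𝓝 x, y ^ k < ε := by
    refine (continuous_pow k).continuousAt.eventually (gt_mem_nhds ?_)
    exact (pow_le_pow_left₀ (by linarith [hx.1]) hx.2 k).trans_lt hkpow
  filter_upwards [hlin, hpow] with y hy₁ hy₂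
  simp [cutoffProduct, hA₀ _ hy₂, hA₁ _ hy₁]

theorem eventually_deriv_deriv_cutoffProduct_eq_left (hε : 0 < ε) (hA₀ : ∀ t < ε, A t = 0) :
    ∀ᶠ k in atTop, ∀ x ∈ Icc (0:ℝ) (1 / 2),
      deriv (deriv (cutoffProduct A k)) x = (k:ℝ) ^ 2 * deriv (deriv A) (k * x) := by
  have hdecay : Tendsto (fun k : ℕ => ((1:ℝ) / 2) ^ k) atTop (𝓝 0) :=
    tendsto_pow_atTop_nhds_zero_of_lt_one (by norm_num) (by norm_num)
  filter_upwards [hdecay.eventually (gt_mem_nhds hε)] with k hk x hx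
  have hnear : ∀ᶠ y in 𝓝 x, |y| ^ k < ε := by
    refine (continuous_abs.pow k).continuousAt.eventually (gt_mem_nhds ?_)
    exact (pow_le_pow_left₀ (abs_nonneg x) (by rw [abs_of_nonneg hx.1]; exact hx.2) k).trans_lt hk
  have heq : cutoffProduct A k =ᶠ[𝓝 x] fun y => A (k * y) := by
    filter_upwards [hnear] with y hy
    have : y ^ k < ε := ((le_abs_self _).trans (abs_pow y k).le).trans_lt hy
    simp [cutoffProduct, hA₀ _ this]
  rw [heq.deriv.deriv_eq, deriv_deriv_comp_mul_left]

theorem deriv_deriv_cutoffProduct_eq_right (hε : 0 < ε) (hA₁ : ∀ t, 1 - ε < t → A t = 1)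
    {k : ℕ} (hk : 2 ≤ k) {x : ℝ} (hx : x ∈ Icc (1 / 2 : ℝ) 1) :
    deriv (deriv (cutoffProduct A k)) x = -deriv (deriv fun y => A (y ^ k)) x := by
  have hlin : ∀ᶠ y in 𝓝 x, 1 - ε < (k:ℝ) * y := by
    refine (continuous_const.mul continuous_id).continuousAt.eventually (lt_mem_nhds ?_)
    show 1 - ε < (k:ℝ) * x
    have : (2:ℝ) ≤ k := by exact_mod_cast hk
    nlinarith [hx.1]
  have heq : cutoffProduct A k =ᶠ[𝓝 x] fun y => 1 - A (y ^ k) := by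
    filter_upwards [hlin] with y hy
    simp [cutoffProduct, hA₁ _ hy]
  rw [heq.deriv.deriv_eq, deriv_deriv_const_sub]

theorem eventuallyEq_const_of_notMem_Icc (hA₀ : ∀ t < ε, A t = 0)
    (hA₁ : ∀ t, 1 - ε < t → A t = 1) {t : ℝ} (ht : t ∉ Icc ε (1 - ε)) :
    ∃ u, A =ᶠ[𝓝 t] fun _ => u := by
  rcases not_and_or.mp ht with ht | ht
  · exact ⟨0, eventually_of_mem (Iio_mem_nhds (not_le.mp ht)) hA₀⟩
  · exact ⟨1, eventually_of_mem (Ioi_mem_nhds (not_le.mp ht)) hA₁⟩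

theorem hasCompactSupport_deriv_of_eq_const_outside (hA₀ : ∀ t < ε, A t = 0)
    (hA₁ : ∀ t, 1 - ε < t → A t = 1) : HasCompactSupport (deriv A) :=
  HasCompactSupport.intro isCompact_Icc fun _ ht =>
    (eventuallyEq_const_of_notMem_Icc hA₀ hA₁ ht).elim fun _ h =>
      deriv_eq_zero_of_eventuallyEq_const h

theorem hasCompactSupport_deriv_deriv_of_eq_const_outside (hA₀ : ∀ t < ε, A t = 0)
    (hA₁ : ∀ t, 1 - ε < t → A t = 1) : HasCompactSupport (deriv (deriv A)) :=
  HasCompactSupport.intro isCompact_Icc fun _ ht =>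
    (eventuallyEq_const_of_notMem_Icc hA₀ hA₁ ht).elim fun _ h =>
      deriv_deriv_eq_zero_of_eventuallyEq_const h

theorem tendsto_integral_mul_deriv_deriv_cutoffProduct_left (hA : ContDiff ℝ 2 A) (hε : 0 < ε)
    (hA₀ : ∀ t < ε, A t = 0) (hA₁ : ∀ t, 1 - ε < t → A t = 1) {f : ℝ → ℝ}
    {d₀ : ℝ} (hf : ContinuousOn f (Icc 0 (1 / 2))) (hf₀ : HasDerivWithinAt f d₀ (Ici 0) 0) :
    Tendsto (fun k : ℕ => ∫ x in (0:ℝ)..(1 / 2), f x * deriv (deriv (cutoffProduct A k)) x)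
      atTop (𝓝 (-d₀)) := by
  have hh := contDiff_cutoffProduct hA
  have hmid := eventually_cutoffProduct_eventuallyEq_one hε hA₀ hA₁ (δ := 1 / 2) (by norm_num)
  have hhalf : (1 / 2 : ℝ) ∈ Icc (1 / 2) (1 - 1 / 2) := by norm_num
  have := tendsto_integral_mul_of_moments (c := -1) (x₀ := 0)
    (C := ∫ u, |u| * |deriv (deriv A) u|) (by norm_num) hf (hf₀.mono Icc_subset_Ici_self)
    (fun k => (hh k).continuous_deriv_deriv.continuousOn)
    (hmid.mono fun k hk => integral_deriv_deriv_eq_zero_of_eventuallyEq_const (hh k)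
      (cutoffProduct_eventuallyEq_nhds_zero hε hA₀ k) (hk _ hhalf))
    (hmid.mono fun k hk => (integral_sub_mul_deriv_deriv_of_eventuallyEq_const (hh k)
      (cutoffProduct_eventuallyEq_nhds_zero hε hA₀ k) (hk _ hhalf) 0).trans (by norm_num))
    (by
      filter_upwards [eventually_deriv_deriv_cutoffProduct_eq_left hε hA₀,
        eventually_gt_atTop 0] with k hk hk₀
      have heq : ∫ x in (0:ℝ)..(1 / 2), |x - 0| * |deriv (deriv (cutoffProduct A k)) x|
          = ∫ x in (0:ℝ)..(1 / 2), |x| * |(k:ℝ) ^ 2 * deriv (deriv A) (k * x)| :=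
        integral_congr fun x hx => by
          rw [uIcc_of_le (by norm_num)] at hx
          simp only [sub_zero, hk x hx]
      rw [heq]
      exact integral_abs_mul_abs_sq_mul_comp_mul_le hA.continuous_deriv_deriv
        (hasCompactSupport_deriv_deriv_of_eq_const_outside hA₀ hA₁) (by norm_num)
        (Nat.cast_pos.mpr hk₀))
    (fun δ hδ => by
      filter_upwards [eventually_cutoffProduct_eventuallyEq_one hε hA₀ hA₁ hδ]
        with k hk x hx hxδ
      rw [sub_zero, abs_of_nonneg hx.1] at hxδ
      exact deriv_deriv_eq_zero_of_eventuallyEq_const (hk x ⟨hxδ, by linarith [hx.2]⟩))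
  simpa using this

theorem tendsto_integral_mul_deriv_deriv_cutoffProduct_right (hA : ContDiff ℝ 2 A) (hε : 0 < ε)
    (hA₀ : ∀ t < ε, A t = 0) (hA₁ : ∀ t, 1 - ε < t → A t = 1) {f : ℝ → ℝ}
    {d₁ : ℝ} (hf : ContinuousOn f (Icc (1 / 2) 1)) (hf₁ : HasDerivWithinAt f d₁ (Iic 1) 1) :
    Tendsto (fun k : ℕ => ∫ x in (1 / 2 : ℝ)..1, f x * deriv (deriv (cutoffProduct A k)) x)
      atTop (𝓝 d₁) := by
  have hh := contDiff_cutoffProduct hA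
  have hmid := eventually_cutoffProduct_eventuallyEq_one hε hA₀ hA₁ (δ := 1 / 2) (by norm_num)
  have hhalf : (1 / 2 : ℝ) ∈ Icc (1 / 2) (1 - 1 / 2) := by norm_num
  obtain ⟨M, hM⟩ := (hA.continuous_deriv one_le_two).bounded_above_of_compact_support
    (hasCompactSupport_deriv_of_eq_const_outside hA₀ hA₁)
  obtain ⟨M', hM'⟩ := hA.continuous_deriv_deriv.bounded_above_of_compact_support
    (hasCompactSupport_deriv_deriv_of_eq_const_outside hA₀ hA₁)
  have := tendsto_integral_mul_of_moments (c := 1) (x₀ := 1) (C := M + M') (by norm_num) hf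
    (hf₁.mono Icc_subset_Iic_self) (fun k => (hh k).continuous_deriv_deriv.continuousOn)
    (hmid.mono fun k hk => integral_deriv_deriv_eq_zero_of_eventuallyEq_const (hh k)
      (hk _ hhalf) (cutoffProduct_eventuallyEq_nhds_one hε hA₁ k))
    (hmid.mono fun k hk => (integral_sub_mul_deriv_deriv_of_eventuallyEq_const (hh k)
      (hk _ hhalf) (cutoffProduct_eventuallyEq_nhds_one hε hA₁ k) 1).trans (by norm_num))
    (by
      filter_upwards [eventually_ge_atTop 2] with k hk
      obtain ⟨n, rfl⟩ : ∃ n, k = n + 2 := ⟨k - 2, by omega⟩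
      have heq : ∫ x in (1 / 2 : ℝ)..1, |x - 1| * |deriv (deriv (cutoffProduct A (n + 2))) x|
          = ∫ x in (1 / 2 : ℝ)..1, |x - 1| * |deriv (deriv fun y => A (y ^ (n + 2))) x| :=
        integral_congr fun x hx => by
          rw [uIcc_of_le (by norm_num)] at hx
          rw [deriv_deriv_cutoffProduct_eq_right hε hA₁ hk hx, abs_neg]
      rw [heq]
      exact integral_abs_sub_one_mul_abs_deriv_deriv_comp_pow_le hA (by simpa using hM)
        (by simpa using hM') (by norm_num) (by norm_num) n)
    (fun δ hδ => by
      filter_upwards [eventually_cutoffProduct_eventuallyEq_one hε hA₀ hA₁ hδ]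
        with k hk x hx hxδ
      rw [abs_of_nonpos (by linarith [hx.2])] at hxδ
      exact deriv_deriv_eq_zero_of_eventuallyEq_const (hk x ⟨by linarith [hx.1], by linarith⟩))
  simpa using this

theorem tendsto_integral_mul_deriv_deriv_cutoffProduct (hA : ContDiff ℝ 2 A) (hε : 0 < ε)
    (hA₀ : ∀ t < ε, A t = 0) (hA₁ : ∀ t, 1 - ε < t → A t = 1) {f : ℝ → ℝ}
    {d₀ d₁ : ℝ} (hf : ContinuousOn f (Icc 0 1)) (hf₀ : HasDerivWithinAt f d₀ (Ici 0) 0)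
    (hf₁ : HasDerivWithinAt f d₁ (Iic 1) 1) :
    Tendsto (fun k : ℕ => ∫ x in (0:ℝ)..1, f x * deriv (deriv (cutoffProduct A k)) x)
      atTop (𝓝 (d₁ - d₀)) := by
  have hcont : ∀ k, ContinuousOn (fun x => f x * deriv (deriv (cutoffProduct A k)) x)
      (Icc 0 1) := fun k => hf.mul (contDiff_cutoffProduct hA k).continuous_deriv_deriv.continuousOn
  have hsum := (tendsto_integral_mul_deriv_deriv_cutoffProduct_left hA hε hA₀ hA₁
    (hf.mono (Icc_subset_Icc_right (by norm_num))) hf₀).add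
    (tendsto_integral_mul_deriv_deriv_cutoffProduct_right hA hε hA₀ hA₁
      (hf.mono (Icc_subset_Icc_left (by norm_num))) hf₁)
  rw [neg_add_eq_sub] at hsum
  refine hsum.congr fun k => integral_add_adjacent_intervals
    ((hcont k).mono ?_).intervalIntegrable ((hcont k).mono ?_).intervalIntegrable <;>
  exact uIcc_subset_Icc (by norm_num) (by norm_num)

end CutoffProduct

section Primitive

variable {Φ : ℝ → ℝ}

theorem contDiff_primitive {n : ℕ} (hΦ : ContDiff ℝ n Φ) :
    ContDiff ℝ (n + 1) fun t => ∫ z in (0:ℝ)..t, Φ z := by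
  have hΦc := hΦ.continuous
  have hderiv : ∀ t, HasDerivAt (fun t => ∫ z in (0:ℝ)..t, Φ z) (Φ t) t := fun t =>
    integral_hasDerivAt_right (hΦc.intervalIntegrable _ _) (hΦc.stronglyMeasurableAtFilter _ _)
      hΦc.continuousAt
  rw [contDiff_succ_iff_deriv]
  refine ⟨fun t => (hderiv t).differentiableAt, by simp, ?_⟩
  rwa [funext fun t => (hderiv t).deriv]

theorem primitive_eq_zero_of_lt {ε : ℝ} (hε : 0 < ε) (hΦ : ∀ t < ε, Φ t = 0) {t : ℝ}
    (ht : t < ε) : ∫ z in (0:ℝ)..t, Φ z = 0 := by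
  rw [integral_congr (g := fun _ => 0) fun z hz => hΦ z ?_, intervalIntegral.integral_zero]
  rcases mem_uIcc.mp hz with hz | hz <;> linarith [hz.2]

theorem primitive_eq_one_of_gt (hΦc : Continuous Φ) (hΦint : ∫ z in (0:ℝ)..1, Φ z = 1)
    {ε : ℝ} (hε : 0 < ε) (hΦ : ∀ t, 1 - ε < t → Φ t = 0) {t : ℝ} (ht : 1 - ε < t) :
    ∫ z in (0:ℝ)..t, Φ z = 1 := by
  rw [← integral_add_adjacent_intervals (b := 1) (hΦc.intervalIntegrable _ _)
    (hΦc.intervalIntegrable _ _), hΦint, integral_congr (g := fun _ => 0) fun z hz => hΦ z ?_,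
    intervalIntegral.integral_zero, add_zero]
  rcases mem_uIcc.mp hz with hz | hz <;> linarith [hz.1]

theorem hAux_eq_cutoffProduct (hΦc : Continuous Φ) (hΦint : ∫ z in (0:ℝ)..1, Φ z = 1)
    (k : ℕ) :
    hAux Φ k = cutoffProduct (fun t => ∫ z in (0:ℝ)..t, Φ z) k := by
  funext x
  rw [hAux, cutoffProduct, ← integral_interval_sub_left (a := 0) (b := 1)
    (hΦc.intervalIntegrable _ _) (hΦc.intervalIntegrable _ _), hΦint]

end Primitive

theorem pairing_second_deriv_general (Φ : ℝ → ℝ) (hΦsmooth : ContDiff ℝ 2 Φ)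
    (hΦsupp : tsupport Φ ⊆ Set.Ioo (0:ℝ) 1)
    (hΦint : (∫ x in (0:ℝ)..1, Φ x) = 1)
    (f : ℝ → ℝ) (hf : ContinuousOn f (Set.Icc (0:ℝ) 1))
    (d0 d1 : ℝ)
    (hf0 : HasDerivWithinAt f d0 (Set.Ici (0:ℝ)) 0)
    (hf1 : HasDerivWithinAt f d1 (Set.Iic (1:ℝ)) 1) :
    Tendsto (fun k : ℕ => ∫ x in (0:ℝ)..1, f x * deriv (deriv (hAux Φ k)) x)
      atTop (nhds (d1 - d0)) := by
  have hΦc := hΦsmooth.continuous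
  obtain ⟨ε, hε, hsupp⟩ := (isCompact_Icc.of_isClosed_subset (isClosed_tsupport Φ)
    (hΦsupp.trans Ioo_subset_Icc_self)).exists_pos_subset_Ioo hΦsupp
  have hΦ₀ : ∀ t ∉ Ioo ε (1 - ε), Φ t = 0 := fun t ht =>
    image_eq_zero_of_notMem_tsupport fun h => ht (by simpa using hsupp h)
  simp only [hAux_eq_cutoffProduct hΦc hΦint]
  exact tendsto_integral_mul_deriv_deriv_cutoffProduct
    ((contDiff_primitive (n := 1) (hΦsmooth.of_le one_le_two)).of_le (by norm_num)) hε
    (fun _ => primitive_eq_zero_of_lt hε fun s hs => hΦ₀ s fun h => by linarith [h.1])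
    (fun _ => primitive_eq_one_of_gt hΦc hΦint hε fun s hs =>
      hΦ₀ s fun h => by linarith [h.2])
    hf hf0 hf1

theorem pairing_second_deriv (Φ : ℝ → ℝ) (hΦsmooth : ContDiff ℝ 2 Φ)
    (hΦsupp : tsupport Φ ⊆ Set.Ioo (0:ℝ) 1)
    (hΦnonneg : ∀ x, 0 ≤ Φ x) (hΦle : ∀ x, Φ x ≤ 2)
    (hΦint : (∫ x in (0:ℝ)..1, Φ x) = 1)
    (f : ℝ → ℝ) (hf : ContinuousOn f (Set.Icc (0:ℝ) 1))
    (d0 d1 : ℝ)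
    (hf0 : HasDerivWithinAt f d0 (Set.Ici (0:ℝ)) 0)
    (hf1 : HasDerivWithinAt f d1 (Set.Iic (1:ℝ)) 1) :
    Tendsto (fun k : ℕ => ∫ x in (0:ℝ)..1, f x * deriv (deriv (hAux Φ k)) x)
      atTop (nhds (d1 - d0)) :=
  pairing_second_deriv_general Φ hΦsmooth hΦsupp hΦint f hf d0 d1 hf0 hf1
end
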